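/- arXiv:2201.11731 — 8 statements merged into one kernel-verified Lean document; each statement's English description precedes it below -/
import Mathlib

section
/- Let G and H be non-empty connected graphs, let D ⊆ V(G) be a c-deletion set for G, and let φ be a locally surjective homomorphism from G to H. Then φ(D) is a c-deletion set for H, i.e., every connected component of H \ φ(D) has at most c vertices. -/
/-- Reachability within the vertex subset `S` using the adjacency relation `R`. -/
def RelReachIn {W : Type*} (R : W → W → Prop) (S : Set W) : W → W → Prop :=
  Relation.ReflTransGen (fun x y => x ∈ S ∧ y ∈ S ∧ R x y)

/-- The connected component, inside the induced subgraph on `S`, containing `a`. -/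
def RelCompIn {W : Type*} (R : W → W → Prop) (S : Set W) (a : W) : Set W :=
  {b | b ∈ S ∧ RelReachIn R S a b}

theorem image_of_deletion_set_is_deletion_set {V W : Type*} [Nonempty V] [Nonempty W]
    (G : SimpleGraph V) (hGconn : G.Connected)
    (H : W → W → Prop) (hHsymm : Symmetric H)
    (hHconn : ∀ a b : W, Relation.ReflTransGen H a b)
    (φ : V → W)
    (hom : ∀ {u v : V}, G.Adj u v → H (φ u) (φ v))
    (hls : ∀ u : V, φ '' (G.neighborSet u) = {x | H (φ u) x})
    (c : ℕ) (hc : 1 ≤ c)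
    (D : Set V) (hD : ∀ a ∉ D, (RelCompIn G.Adj Dᶜ a).encard ≤ (c : ℕ∞)) :
    ∀ b ∉ φ '' D, (RelCompIn H (φ '' D)ᶜ b).encard ≤ (c : ℕ∞) := by
  -- φ is surjective
  have hsurj : ∀ w : W, ∃ a : V, φ a = w := by
    intro w
    obtain ⟨v0⟩ := ‹Nonempty V›
    have h := hHconn (φ v0) w
    induction h with
    | refl => exact ⟨v0, rfl⟩
    | tail _ hxy ih =>
      obtain ⟨a, ha⟩ := ih
      have hmem := hxy
      rw [← ha] at hmem
      obtain ⟨a', _, ha'⟩ := (Set.ext_iff.mp (hls a) _).mpr hmem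
      exact ⟨a', ha'⟩
  intro b hb
  obtain ⟨a, ha⟩ := hsurj b
  have haD : a ∉ D := fun h => hb ⟨a, h, ha⟩
  -- the H-component of b is contained in the image of the G-component of a
  have hsub : RelCompIn H (φ '' D)ᶜ b ⊆ φ '' (RelCompIn G.Adj Dᶜ a) := by
    rintro y ⟨hyS, hyR⟩
    clear hyS
    have key : ∀ y, RelReachIn H (φ '' D)ᶜ b y →
        ∃ a' : V, a' ∈ RelCompIn G.Adj Dᶜ a ∧ φ a' = y := by
      intro y hy
      induction hy with
      | refl =>
        exact ⟨a, ⟨haD, Relation.ReflTransGen.refl⟩, ha⟩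
      | tail _ hstep ih =>
        obtain ⟨hxS, hyS, hxy⟩ := hstep
        obtain ⟨a', ⟨ha'D, ha'R⟩, ha'⟩ := ih
        have hmem := hxy
        rw [← ha'] at hmem
        obtain ⟨a'', hadj, ha''⟩ := (Set.ext_iff.mp (hls a') _).mpr hmem
        have ha''D : a'' ∉ D := fun h => hyS ⟨a'', h, ha''⟩
        refine ⟨a'', ⟨ha''D, ha'R.tail ⟨ha'D, ha''D, hadj⟩⟩, ha''⟩
    obtain ⟨a', ha'mem, ha'⟩ := key y hyR
    exact ⟨a', ha'mem, ha'⟩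
  calc (RelCompIn H (φ '' D)ᶜ b).encard
      ≤ (φ '' (RelCompIn G.Adj Dᶜ a)).encard := Set.encard_mono hsub
    _ ≤ (RelCompIn G.Adj Dᶜ a).encard := Set.encard_image_le _ _
    _ ≤ (c : ℕ∞) := hD a haD
end

section
/- Let G be a graph that has a c-deletion set of size at most k. Then every vertex of G that has degree at least k + c belongs to every c-deletion set of G of size at most k; in particular, the set D_G^{k+c} of vertices of degree at least k+c has size at most k. -/
section RelCompIn

variable {W : Type*} {R : W → W → Prop} {S : Set W} {a b : W}

theorem mem_relCompIn_self (ha : a ∈ S) : a ∈ RelCompIn R S a :=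
  ⟨ha, Relation.ReflTransGen.refl⟩

theorem mem_relCompIn_of_rel (ha : a ∈ S) (hb : b ∈ S) (hab : R a b) : b ∈ RelCompIn R S a :=
  ⟨hb, Relation.ReflTransGen.single ⟨ha, hb, hab⟩⟩

end RelCompIn

namespace SimpleGraph

def IsDeletionSet {V : Type*} (G : SimpleGraph V) (c : ℕ) (S : Set V) : Prop :=
  ∀ a ∉ S, (RelCompIn G.Adj Sᶜ a).ncard ≤ c

section DeletionSet

variable {V : Type*} (G : SimpleGraph V) {S : Set V} {v : V}

theorem neighborSet_subset_union_relCompIn_diff (hv : v ∉ S) :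
    G.neighborSet v ⊆ S ∪ (RelCompIn G.Adj Sᶜ v \ {v}) := by
  intro u hu
  by_cases huS : u ∈ S
  · exact Or.inl huS
  · exact Or.inr ⟨mem_relCompIn_of_rel hv huS hu, G.ne_of_adj hu |>.symm⟩

variable [Fintype V] [DecidableRel G.Adj]

theorem degree_lt_ncard_add_ncard_relCompIn (hv : v ∉ S) :
    G.degree v < S.ncard + (RelCompIn G.Adj Sᶜ v).ncard := by
  have hdeg : G.degree v = (G.neighborSet v).ncard := by
    rw [← card_neighborSet_eq_degree, ← Nat.card_coe_set_eq, Nat.card_eq_fintype_card]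
  have hcomp : (RelCompIn G.Adj Sᶜ v \ {v}).ncard + 1 = (RelCompIn G.Adj Sᶜ v).ncard :=
    Set.ncard_sdiff_singleton_add_one (mem_relCompIn_self (Set.mem_compl hv))
  calc G.degree v
      ≤ (S ∪ (RelCompIn G.Adj Sᶜ v \ {v})).ncard :=
        hdeg ▸ Set.ncard_le_ncard (G.neighborSet_subset_union_relCompIn_diff hv)
    _ ≤ S.ncard + (RelCompIn G.Adj Sᶜ v \ {v}).ncard := Set.ncard_union_le _ _
    _ < S.ncard + (RelCompIn G.Adj Sᶜ v).ncard := by omega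

variable {G} in
theorem IsDeletionSet.mem_of_add_le_degree {c k : ℕ} (hS : G.IsDeletionSet c S)
    (hSk : S.ncard ≤ k) (hv : k + c ≤ G.degree v) : v ∈ S := by
  by_contra hvS
  have := G.degree_lt_ncard_add_ncard_relCompIn hvS
  have := hS v hvS
  omega

end DeletionSet

end SimpleGraph

theorem high_degree_vertices_in_every_deletion_set_general {V : Type*} [Fintype V]
    (G : SimpleGraph V) [DecidableRel G.Adj] (c k : ℕ)
    (hdel : ∃ D' : Set V, D'.ncard ≤ k ∧ ∀ a ∉ D', (RelCompIn G.Adj D'ᶜ a).ncard ≤ c) :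
    (∀ S : Set V, (∀ a ∉ S, (RelCompIn G.Adj Sᶜ a).ncard ≤ c) → S.ncard ≤ k →
      ∀ v : V, k + c ≤ G.degree v → v ∈ S) ∧
    {v : V | k + c ≤ G.degree v}.ncard ≤ k := by
  have high_degree_mem : ∀ S : Set V, G.IsDeletionSet c S → S.ncard ≤ k →
      ∀ v : V, k + c ≤ G.degree v → v ∈ S :=
    fun _ hS hSk _ hv => hS.mem_of_add_le_degree hSk hv
  refine ⟨high_degree_mem, ?_⟩
  obtain ⟨D', hD'k, hD'⟩ := hdel
  calc {v : V | k + c ≤ G.degree v}.ncard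
      ≤ D'.ncard := Set.ncard_le_ncard fun v hv => high_degree_mem D' hD' hD'k v hv
    _ ≤ k := hD'k

theorem high_degree_vertices_in_every_deletion_set {V : Type*} [Fintype V]
    (G : SimpleGraph V) [DecidableRel G.Adj] (c k : ℕ) (hc : 1 ≤ c) (hk : 1 ≤ k)
    (hdel : ∃ D' : Set V, D'.ncard ≤ k ∧ ∀ a ∉ D', (RelCompIn G.Adj D'ᶜ a).ncard ≤ c) :
    (∀ S : Set V, (∀ a ∉ S, (RelCompIn G.Adj Sᶜ a).ncard ≤ c) → S.ncard ≤ k →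
      ∀ v : V, k + c ≤ G.degree v → v ∈ S) ∧
    {v : V | k + c ≤ G.degree v}.ncard ≤ k :=
  high_degree_vertices_in_every_deletion_set_general G c k hdel
end

section
/- Let G be a graph that has a c-deletion set of size at most k. Then the set D_G^{k+c} of all vertices of G of degree at least k+c is a (k·c·(k+c))-deletion set of G of size at most k, i.e., |D_G^{k+c}| ≤ k and every connected component of G \ D_G^{k+c} has at most k·c·(k+c) vertices. -/
/-!
Let `D` be a `c`-deletion set with `|D| ≤ k`. A vertex `v ∉ D` has its closed neighbourhood
inside `D` together with the component of `G \ D` containing `v`, so `deg v < k + c`; hence all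
vertices of degree at least `k + c` lie in `D`. A component `C` of the remaining low-degree part
either avoids `D`, and then lies in a single component of `G \ D`, or is covered by its at most
`k` vertices in `D`, each of which has at most `k + c - 1` neighbours, and each neighbour outside
`D` brings along a component of at most `c` vertices: `|C| ≤ k (1 + (k + c - 1) c) ≤ k c (k + c)`.
-/

def IsDeletionSet {W : Type*} (R : W → W → Prop) (c : ℕ) (D : Set W) : Prop :=
  ∀ a ∉ D, (RelCompIn R Dᶜ a).ncard ≤ c

theorem Set.ncard_biUnion_le_mul {ι α : Type*} {s : Set ι} (hs : s.Finite) {f : ι → Set α}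
    {m : ℕ} (hf : ∀ i ∈ s, (f i).ncard ≤ m) : (⋃ i ∈ s, f i).ncard ≤ s.ncard * m := by
  lift s to Finset ι using hs
  simp only [Finset.mem_coe, Set.ncard_coe_finset]
  exact (Finset.set_ncard_biUnion_le s f).trans (Finset.sum_le_card_nsmul s _ m hf)

theorem SimpleGraph.ncard_neighborSet {V : Type*} (G : SimpleGraph V) [Fintype V]
    [DecidableRel G.Adj] (v : V) : (G.neighborSet v).ncard = G.degree v := by
  rw [← card_neighborSet_eq_degree, ← Nat.card_eq_fintype_card, Nat.card_coe_set_eq]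

section Relation

variable {W : Type*} {R : W → W → Prop} {S T : Set W} {a b : W}

theorem RelReachIn.mem_left (hab : RelReachIn R S a b) (hb : b ∈ S) : a ∈ S := by
  induction hab with
  | refl => exact hb
  | tail _ hxy ih => exact ih hxy.1

theorem RelReachIn.symm [Std.Symm R] (hab : RelReachIn R S a b) : RelReachIn R S b a :=
  (@Relation.ReflTransGen.stdSymm _ (fun x y => x ∈ S ∧ y ∈ S ∧ R x y)
    ⟨fun _ _ ⟨hx, hy, hr⟩ => ⟨hy, hx, Std.Symm.symm _ _ hr⟩⟩).symm _ _ hab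

theorem RelReachIn.exists_edge_into {z : W} (hbz : RelReachIn R S b z) (hb : b ∉ T)
    (hz : z ∈ T) :
    ∃ w v, w ∉ T ∧ v ∈ S ∩ T ∧ R w v ∧ RelReachIn R Tᶜ b w ∧ RelReachIn R S b v := by
  induction hbz using Relation.ReflTransGen.head_induction_on with
  | refl => exact absurd hz hb
  | @head x y hxy _ ih =>
    obtain ⟨hx, hy, hr⟩ := hxy
    by_cases hyT : y ∈ T
    · exact ⟨x, y, hb, ⟨hy, hyT⟩, hr, .refl, .single ⟨hx, hy, hr⟩⟩
    · obtain ⟨w, v, hw, hv, hwv, hbw, hbv⟩ := ih hyT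
      exact ⟨w, v, hw, hv, hwv, .head ⟨hb, hyT, hr⟩ hbw, .head ⟨hx, hy, hr⟩ hbv⟩

theorem relCompIn_subset_relCompIn_of_subset (h : RelCompIn R S a ⊆ T) :
    RelCompIn R S a ⊆ RelCompIn R T a := by
  rintro b ⟨hb, hab⟩
  refine ⟨h ⟨hb, hab⟩, ?_⟩
  induction hab with
  | refl => exact .refl
  | @tail x y hax hxy ih =>
    obtain ⟨hx, hy, hr⟩ := hxy
    exact .tail (ih hx) ⟨h ⟨hx, hax⟩, h ⟨hy, hax.tail ⟨hx, hy, hr⟩⟩, hr⟩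

theorem insert_subset_union_relCompIn (ha : a ∉ T) :
    insert a {w | R a w} ⊆ T ∪ RelCompIn R Tᶜ a := by
  rintro w (rfl | hw)
  · exact .inr ⟨ha, .refl⟩
  · by_cases hwT : w ∈ T
    · exact .inl hwT
    · exact .inr ⟨hwT, .single ⟨ha, hwT, hw⟩⟩

theorem relCompIn_subset_biUnion [Std.Symm R] (hT : (RelCompIn R S a ∩ T).Nonempty) :
    RelCompIn R S a ⊆
      ⋃ v ∈ RelCompIn R S a ∩ T, insert v (⋃ w ∈ {w | R v w} \ T, RelCompIn R Tᶜ w) := by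
  obtain ⟨z, ⟨-, haz⟩, hz⟩ := hT
  intro b hb
  by_cases hbT : b ∈ T
  · exact Set.mem_biUnion ⟨hb, hbT⟩ (Set.mem_insert b _)
  obtain ⟨w, v, hw, ⟨hvS, hvT⟩, hwv, hbw, hbv⟩ :=
    RelReachIn.exists_edge_into (hb.2.symm.trans haz) hbT hz
  exact Set.mem_biUnion ⟨⟨hvS, hb.2.trans hbv⟩, hvT⟩
    (Set.mem_insert_of_mem v <| Set.mem_biUnion ⟨Std.Symm.symm _ _ hwv, hw⟩ ⟨hbT, hbw.symm⟩)

end Relation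

namespace IsDeletionSet

variable {V : Type*} [Fintype V] {G : SimpleGraph V} [DecidableRel G.Adj] {c : ℕ} {D : Set V}

theorem degree_lt (hD : IsDeletionSet G.Adj c D) {v : V} (hv : v ∉ D) :
    G.degree v < D.ncard + c := by
  calc G.degree v < (insert v (G.neighborSet v)).ncard := by
        rw [Set.ncard_insert_of_notMem G.notMem_neighborSet_self, G.ncard_neighborSet]
        exact Nat.lt_succ_self _
    _ ≤ (D ∪ RelCompIn G.Adj Dᶜ v).ncard :=
      Set.ncard_le_ncard (insert_subset_union_relCompIn hv)
    _ ≤ D.ncard + (RelCompIn G.Adj Dᶜ v).ncard := Set.ncard_union_le _ _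
    _ ≤ D.ncard + c := Nat.add_le_add_left (hD v hv) _

theorem ncard_relCompIn_le (hD : IsDeletionSet G.Adj c D) {S : Set V} {Δ : ℕ}
    (hS : ∀ v ∈ S, G.degree v ≤ Δ) (a : V) :
    (RelCompIn G.Adj S a).ncard ≤ max c (D.ncard * (1 + Δ * c)) := by
  set C := RelCompIn G.Adj S a
  rcases (C ∩ D).eq_empty_or_nonempty with hCD | hCD
  · refine le_max_of_le_left ?_
    rcases C.eq_empty_or_nonempty with hC | ⟨b, hb, hab⟩
    · simp [hC]
    have haD : a ∉ D := fun haD => hCD.subset ⟨⟨hab.mem_left hb, .refl⟩, haD⟩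
    have hC : C ⊆ Dᶜ := fun b hb hbD => hCD.subset ⟨hb, hbD⟩
    exact (Set.ncard_le_ncard (relCompIn_subset_relCompIn_of_subset hC)).trans (hD a haD)
  · refine le_max_of_le_right ?_
    have hpiece : ∀ v ∈ C ∩ D,
        (insert v (⋃ w ∈ G.neighborSet v \ D, RelCompIn G.Adj Dᶜ w)).ncard ≤ 1 + Δ * c := by
      intro v hv
      calc _ ≤ (⋃ w ∈ G.neighborSet v \ D, RelCompIn G.Adj Dᶜ w).ncard + 1 :=
            Set.ncard_insert_le _ _
        _ ≤ (G.neighborSet v \ D).ncard * c + 1 :=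
          Nat.add_le_add_right (Set.ncard_biUnion_le_mul (Set.toFinite _) fun w hw => hD w hw.2) _
        _ ≤ Δ * c + 1 := by
          gcongr
          exact (Set.ncard_le_ncard Set.sdiff_subset).trans
            ((G.ncard_neighborSet v).trans_le (hS v hv.1.1))
        _ = 1 + Δ * c := Nat.add_comm _ _
    have : Std.Symm G.Adj := G.symm
    calc C.ncard ≤ _ := Set.ncard_le_ncard (relCompIn_subset_biUnion hCD)
      _ ≤ (C ∩ D).ncard * (1 + Δ * c) := Set.ncard_biUnion_le_mul (Set.toFinite _) hpiece
      _ ≤ D.ncard * (1 + Δ * c) :=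
        Nat.mul_le_mul_right _ (Set.ncard_le_ncard Set.inter_subset_right)

end IsDeletionSet

theorem high_degree_set_is_deletion_set {V : Type*} [Fintype V]
    (G : SimpleGraph V) [DecidableRel G.Adj] (c k : ℕ) (hc : 1 ≤ c) (hk : 1 ≤ k)
    (hdel : ∃ D' : Set V, D'.ncard ≤ k ∧ ∀ a ∉ D', (RelCompIn G.Adj D'ᶜ a).ncard ≤ c) :
    {v : V | k + c ≤ G.degree v}.ncard ≤ k ∧
    ∀ a ∉ {v : V | k + c ≤ G.degree v},
      (RelCompIn G.Adj {v : V | k + c ≤ G.degree v}ᶜ a).ncard ≤ k * c * (k + c) := by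
  obtain ⟨D, hDk, hD⟩ : ∃ D : Set V, D.ncard ≤ k ∧ IsDeletionSet G.Adj c D := hdel
  have hsub : {v : V | k + c ≤ G.degree v} ⊆ D := fun v hv =>
    not_not.1 fun hvD => (hD.degree_lt hvD).not_ge (le_trans (by gcongr) hv)
  refine ⟨(Set.ncard_le_ncard hsub).trans hDk, fun a _ => ?_⟩
  obtain ⟨Δ, hΔ⟩ : ∃ Δ, k + c = Δ + 1 := ⟨k + c - 1, by omega⟩
  have hlow : ∀ v ∈ {v : V | k + c ≤ G.degree v}ᶜ, G.degree v ≤ Δ := fun v hv => by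
    have : ¬k + c ≤ G.degree v := hv
    omega
  calc _ ≤ max c (D.ncard * (1 + Δ * c)) := hD.ncard_relCompIn_le hlow a
    _ ≤ k * c * (k + c) := by
      rw [hΔ]
      refine max_le ?_ ?_
      · exact (Nat.le_mul_of_pos_left c hk).trans (Nat.le_mul_of_pos_right _ Δ.succ_pos)
      calc D.ncard * (1 + Δ * c) ≤ k * ((Δ + 1) * c) := by gcongr; nlinarith
        _ = k * c * (Δ + 1) := by ring
end

section
/- Let G and H be non-empty connected graphs such that G has a c-deletion set of size at most k, and let φ be a locally surjective homomorphism from G to H. Then φ(D_G^{k+c}) ⊇ D_H^{k+c}, i.e., every vertex of H of degree at least k+c has a pre-image of degree at least k+c in G. -/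
theorem high_degree_vertices_covered {V W : Type*} [Fintype V] [Fintype W]
    [Nonempty V] [Nonempty W]
    (G : SimpleGraph V) (hGconn : G.Connected)
    (H : W → W → Prop) (hHsymm : Symmetric H)
    (hHconn : ∀ a b : W, Relation.ReflTransGen H a b)
    (c k : ℕ) (hc : 1 ≤ c) (hk : 1 ≤ k)
    (hdel : ∃ D : Set V, D.ncard ≤ k ∧ ∀ a ∉ D, (RelCompIn G.Adj Dᶜ a).ncard ≤ c)
    (φ : V → W)
    (hom : ∀ {u v : V}, G.Adj u v → H (φ u) (φ v))
    (hls : ∀ u : V, φ '' (G.neighborSet u) = {x | H (φ u) x}) :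
    {w : W | k + c ≤ {x | H w x}.ncard} ⊆
      φ '' {v : V | k + c ≤ (G.neighborSet v).ncard} := by
  intro w hw
  obtain ⟨v0⟩ := ‹Nonempty V›
  have hsurj : ∀ a : W, Relation.ReflTransGen H (φ v0) a → ∃ v, φ v = a := by
    intro a h
    induction h with
    | refl => exact ⟨v0, rfl⟩
    | @tail b c' h1 h2 ih =>
      obtain ⟨v, hv⟩ := ih
      have hmem : c' ∈ φ '' (G.neighborSet v) := by
        rw [hls v, hv]; exact h2
      obtain ⟨u, _, hu⟩ := hmem
      exact ⟨u, hu⟩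
  obtain ⟨v, hv⟩ := hsurj w (hHconn _ _)
  refine ⟨v, ?_, hv⟩
  have him : φ '' (G.neighborSet v) = {x | H w x} := by rw [hls v, hv]
  have hle : {x | H w x}.ncard ≤ (G.neighborSet v).ncard := by
    rw [← him]
    exact Set.ncard_image_le (Set.toFinite _)
  exact le_trans hw hle
end

section
/- Let G and H be non-empty connected graphs such that G has a c-deletion set of size at most k. If there is a locally surjective homomorphism φ from G to H, then letting D = φ⁻¹(D_H^{k+c}), we have D ⊆ D_G^{k+c} and the restriction of φ to D is a locally surjective homomorphism from G[D] to H[D_H^{k+c}]. -/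
theorem restriction_to_high_degree_preimage_locally_surjective
    {V W : Type*} [Fintype V] [Fintype W] [Nonempty V] [Nonempty W]
    (G : SimpleGraph V) (hGconn : G.Connected)
    (H : W → W → Prop) (hHsymm : Symmetric H)
    (hHconn : ∀ a b : W, Relation.ReflTransGen H a b)
    (c k : ℕ) (hc : 1 ≤ c) (hk : 1 ≤ k)
    (hdel : ∃ D : Set V, D.ncard ≤ k ∧ ∀ a ∉ D, (RelCompIn G.Adj Dᶜ a).ncard ≤ c)
    (φ : V → W)
    (hom : ∀ {u v : V}, G.Adj u v → H (φ u) (φ v))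
    (hls : ∀ u : V, φ '' (G.neighborSet u) = {x | H (φ u) x}) :
    φ ⁻¹' {w : W | k + c ≤ {x | H w x}.ncard} ⊆ {v : V | k + c ≤ (G.neighborSet v).ncard} ∧
    (∀ u ∈ φ ⁻¹' {w : W | k + c ≤ {x | H w x}.ncard},
      ∀ v ∈ φ ⁻¹' {w : W | k + c ≤ {x | H w x}.ncard}, G.Adj u v → H (φ u) (φ v)) ∧
    (∀ u ∈ φ ⁻¹' {w : W | k + c ≤ {x | H w x}.ncard},
      φ '' (G.neighborSet u ∩ φ ⁻¹' {w : W | k + c ≤ {x | H w x}.ncard}) =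
        {x | H (φ u) x} ∩ {w : W | k + c ≤ {x | H w x}.ncard}) := by
  refine ⟨?_, ?_, ?_⟩
  · intro v hv
    have h1 : k + c ≤ {x | H (φ v) x}.ncard := hv
    rw [← hls v] at h1
    exact h1.trans (Set.ncard_image_le (Set.toFinite _))
  · intro u _ v _ huv
    exact hom huv
  · intro u hu
    ext x
    constructor
    · rintro ⟨v, ⟨hv1, hv2⟩, rfl⟩
      exact ⟨hom hv1, hv2⟩
    · rintro ⟨hx1, hx2⟩
      have : x ∈ φ '' (G.neighborSet u) := by rw [hls u]; exact hx1
      obtain ⟨v, hv, rfl⟩ := this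
      exact ⟨v, ⟨hv, hx2⟩, rfl⟩
end

section
/- Let G and H be non-empty connected graphs such that G has a c-deletion set of size at most k. If there is a locally bijective homomorphism φ from G to H, then φ⁻¹(D_H^{k+c}) = D_G^{k+c}, and the restriction of φ to D_G^{k+c} is a locally bijective homomorphism from G[D_G^{k+c}] to H[D_H^{k+c}]. -/
theorem restriction_to_high_degree_locally_bijective
    {V W : Type*} [Fintype V] [Fintype W] [Nonempty V] [Nonempty W]
    (G : SimpleGraph V) (hGconn : G.Connected)
    (H : W → W → Prop) (hHsymm : Symmetric H)
    (hHconn : ∀ a b : W, Relation.ReflTransGen H a b)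
    (c k : ℕ) (hc : 1 ≤ c) (hk : 1 ≤ k)
    (hdel : ∃ D : Set V, D.ncard ≤ k ∧ ∀ a ∉ D, (RelCompIn G.Adj Dᶜ a).ncard ≤ c)
    (φ : V → W)
    (hom : ∀ {u v : V}, G.Adj u v → H (φ u) (φ v))
    (hlb : ∀ u : V, Set.BijOn φ (G.neighborSet u) {x | H (φ u) x}) :
    φ ⁻¹' {w : W | k + c ≤ {x | H w x}.ncard} = {v : V | k + c ≤ (G.neighborSet v).ncard} ∧
    ∀ u ∈ {v : V | k + c ≤ (G.neighborSet v).ncard},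
      Set.BijOn φ (G.neighborSet u ∩ {v : V | k + c ≤ (G.neighborSet v).ncard})
        ({x | H (φ u) x} ∩ {w : W | k + c ≤ {x | H w x}.ncard}) := by
  have hcard : ∀ v : V, {x | H (φ v) x}.ncard = (G.neighborSet v).ncard := fun v => by
    rw [← (hlb v).image_eq, Set.ncard_image_of_injOn (hlb v).injOn]
  constructor
  · ext v
    simp [hcard v]
  · intro u hu
    refine ⟨?_, ?_, ?_⟩
    · rintro a ⟨ha1, ha2⟩
      exact ⟨(hlb u).mapsTo ha1, by simpa [hcard a] using ha2⟩
    · exact (hlb u).injOn.mono Set.inter_subset_left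
    · rintro b ⟨hb1, hb2⟩
      obtain ⟨a, ha, rfl⟩ := (hlb u).surjOn hb1
      exact ⟨a, ⟨ha, by simpa [hcard a] using hb2⟩, rfl⟩
end

section
/- Let G and H be non-empty connected graphs with |V(G)| = |V(H)|. If φ is a locally surjective homomorphism from G to H, then φ is a bijection and in fact a locally bijective homomorphism from G to H. -/
theorem locally_surjective_same_card_is_bijective
    {V W : Type*} [Fintype V] [Fintype W] [Nonempty V] [Nonempty W]
    (hcard : Fintype.card V = Fintype.card W)
    (G : SimpleGraph V) (hGconn : G.Connected)
    (H : W → W → Prop) (hHsymm : Symmetric H)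
    (hHconn : ∀ a b : W, Relation.ReflTransGen H a b)
    (φ : V → W)
    (hom : ∀ {u v : V}, G.Adj u v → H (φ u) (φ v))
    (hls : ∀ u : V, φ '' (G.neighborSet u) = {x | H (φ u) x}) :
    Function.Bijective φ ∧ ∀ u : V, Set.BijOn φ (G.neighborSet u) {x | H (φ u) x} := by
  obtain ⟨v0⟩ := (inferInstance : Nonempty V)
  have hsurj : Function.Surjective φ := by
    intro w
    have h := hHconn (φ v0) w
    induction h with
    | refl => exact ⟨v0, rfl⟩
    | tail _ hstep ih =>
      obtain ⟨u, rfl⟩ := ih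
      have : _ ∈ {x | H (φ u) x} := hstep
      rw [← hls u] at this
      obtain ⟨v, _, hv⟩ := this
      exact ⟨v, hv⟩
  have hbij : Function.Bijective φ :=
    (Fintype.bijective_iff_surjective_and_card φ).mpr ⟨hsurj, hcard⟩
  refine ⟨hbij, fun u => ?_⟩
  refine ⟨fun x hx => ?_, fun x _ y _ h => hbij.1 h, fun x hx => ?_⟩
  · rw [← hls u]; exact ⟨x, hx, rfl⟩
  · rw [← hls u] at hx; exact hx
end

section
/- Let G and H be graphs, D ⊆ V(G), and φ a locally surjective homomorphism from G to H. Let C_G be a connected component of G \ D with φ(C_G) ∩ φ(D) = ∅, and let C_H be the component of H \ φ(D) containing φ(C_G). Then the restriction of φ to D ∪ C_G, viewed as a map from G[D ∪ C_G] to H[φ(D) ∪ C_H], is locally surjective at every vertex v ∈ C_G, i.e., it maps the neighbourhood of v in G[D ∪ C_G] onto the neighbourhood of φ(v) in H[φ(D) ∪ C_H]. -/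
theorem restriction_locally_surjective_on_component {V W : Type*}
    (G : SimpleGraph V)
    (H : W → W → Prop) (hHsymm : Symmetric H)
    (φ : V → W)
    (hom : ∀ {u v : V}, G.Adj u v → H (φ u) (φ v))
    (hls : ∀ u : V, φ '' (G.neighborSet u) = {x | H (φ u) x})
    (D : Set V) (a : V) (ha : a ∉ D)
    (hdisj : (φ '' RelCompIn G.Adj Dᶜ a) ∩ (φ '' D) = ∅)
    (b : W) (hb : b ∉ φ '' D)
    (hsub : φ '' RelCompIn G.Adj Dᶜ a ⊆ RelCompIn H (φ '' D)ᶜ b) :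
    ∀ v ∈ RelCompIn G.Adj Dᶜ a,
      φ '' (G.neighborSet v ∩ (D ∪ RelCompIn G.Adj Dᶜ a)) =
        {x | H (φ v) x} ∩ (φ '' D ∪ RelCompIn H (φ '' D)ᶜ b) := by
  intro v hv
  ext x
  constructor
  · rintro ⟨u, ⟨hadj, hu⟩, rfl⟩
    refine ⟨hom hadj, ?_⟩
    rcases hu with hu | hu
    · exact Or.inl ⟨u, hu, rfl⟩
    · exact Or.inr (hsub ⟨u, hu, rfl⟩)
  · rintro ⟨hx, -⟩
    have : x ∈ φ '' (G.neighborSet v) := (hls v) ▸ hx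
    rcases this with ⟨u, hadj, rfl⟩
    refine ⟨u, ⟨hadj, ?_⟩, rfl⟩
    by_cases hD : u ∈ D
    · exact Or.inl hD
    · exact Or.inr ⟨hD, hv.2.tail ⟨hv.1, hD, hadj⟩⟩
end
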